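/- Let 0 < ν ≤ 1, let a < b be real numbers, let q be a positive integer, and let Ω₀⁻¹ : [a,b] → ℝ^{q×q} be a function taking values in the positive definite q×q matrices whose entries are all uniformly ν-Hölder on [a,b]. Then for every ε > 0 there exist a positive integer N, real numbers μ₁, …, μ_N, a real number σ² > 0, and positive definite q×q matrices Ω₁⁻¹, …, Ω_N⁻¹ such that, defining the Gaussian softmax weights π_j(x) = exp(−(x−μ_j)²/(2σ²)) / Σ_{t=1}^{N} exp(−(x−μ_t)²/(2σ²)), one has ∫_a^b ‖Ω₀⁻¹(x) − Σ_{j=1}^{N} π_j(x) · Ω_j⁻¹‖_F dx < ε. -/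

import Mathlib

open MeasureTheory

/-- Frobenius norm of a square real matrix. -/
noncomputable def frobNorm {q : ℕ} (A : Matrix (Fin q) (Fin q) ℝ) : ℝ :=
  Real.sqrt (∑ i, ∑ j, (A i j) ^ 2)

/-!
The entries of `Ω` are Hölder, so `Ω` is continuous, hence uniformly continuous, on `[a, b]`:
`‖Ω x - Ω y‖ ≤ ε'` once `|x - y| ≤ δ`. Take the centres `μ j` to be a finite `δ / 2`-net of
`[a, b]` and `Ωs j = Ω (μ j)`, positive definite because `μ j ∈ [a, b]`. The mixture is a convex
combination, so its error at `x` is at most the softmax-weighted average of `‖Ω x - Ω (μ j)‖`.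
Centres within `δ` of `x` contribute at most `ε'`. Some centre lies within `δ / 2` of `x`, so every
centre farther than `δ` has weight at most `exp (-(3 δ² / 4) / (2 σ²))`, uniformly in `x`, which
tends to `0` as `σ² → 0`.
-/

open Filter Topology

noncomputable def gaussSoftmax {ι : Type*} [Fintype ι] (μ : ι → ℝ) (σ2 x : ℝ) (j : ι) : ℝ :=
  Real.exp (-(x - μ j) ^ 2 / (2 * σ2)) / ∑ t, Real.exp (-(x - μ t) ^ 2 / (2 * σ2))

section gaussSoftmax

variable {ι : Type*} [Fintype ι] (μ : ι → ℝ)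

lemma gaussSoftmax_nonneg (σ2 x : ℝ) (j : ι) : 0 ≤ gaussSoftmax μ σ2 x j :=
  div_nonneg (Real.exp_pos _).le (Finset.sum_nonneg fun _ _ => (Real.exp_pos _).le)

lemma sum_gaussSoftmax [Nonempty ι] (σ2 x : ℝ) : ∑ j, gaussSoftmax μ σ2 x j = 1 := by
  simp only [gaussSoftmax, ← Finset.sum_div]
  exact div_self (Finset.sum_pos (fun t _ => Real.exp_pos _) Finset.univ_nonempty).ne'

lemma gaussSoftmax_le_exp {σ2 : ℝ} (hσ2 : 0 ≤ σ2) {x r R : ℝ} {j k : ι}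
    (hk : (x - μ k) ^ 2 ≤ r) (hj : R ≤ (x - μ j) ^ 2) :
    gaussSoftmax μ σ2 x j ≤ Real.exp ((r - R) / (2 * σ2)) := by
  calc gaussSoftmax μ σ2 x j
      ≤ Real.exp (-(x - μ j) ^ 2 / (2 * σ2)) / Real.exp (-(x - μ k) ^ 2 / (2 * σ2)) :=
        div_le_div_of_nonneg_left (Real.exp_pos _).le (Real.exp_pos _)
          (Finset.single_le_sum (f := fun t => Real.exp (-(x - μ t) ^ 2 / (2 * σ2)))
            (fun t _ => (Real.exp_pos _).le) (Finset.mem_univ k))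
    _ ≤ Real.exp (-R / (2 * σ2)) / Real.exp (-r / (2 * σ2)) := by
        gcongr
    _ = Real.exp ((r - R) / (2 * σ2)) := by rw [← Real.exp_sub]; ring_nf

end gaussSoftmax

lemma tendsto_exp_div_nhdsGT_zero {c : ℝ} (hc : c < 0) :
    Tendsto (fun σ : ℝ => Real.exp (c / σ)) (𝓝[>] 0) (𝓝 0) :=
  Real.tendsto_exp_atBot.comp (tendsto_inv_nhdsGT_zero.const_mul_atTop_of_neg hc)

lemma norm_sub_sum_smul_le {ι E : Type*} [Fintype ι] [SeminormedAddCommGroup E]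
    [NormedSpace ℝ E] (y : E) (z : ι → E) {w : ι → ℝ} (hw : ∀ j, 0 ≤ w j)
    (hw1 : ∑ j, w j = 1) :
    ‖y - ∑ j, w j • z j‖ ≤ ∑ j, w j * ‖y - z j‖ := by
  have hy : y - ∑ j, w j • z j = ∑ j, w j • (y - z j) := by
    simp only [smul_sub, Finset.sum_sub_distrib, ← Finset.sum_smul, hw1, one_smul]
  rw [hy]
  refine (norm_sum_le _ _).trans (le_of_eq (Finset.sum_congr rfl fun j _ => ?_))
  rw [norm_smul, Real.norm_of_nonneg (hw j)]

lemma continuousOn_of_abs_sub_le_mul_rpow {f : ℝ → ℝ} {s : Set ℝ} {H ν : ℝ} (hν : 0 < ν)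
    (hf : ∀ x ∈ s, ∀ y ∈ s, |f x - f y| ≤ H * |x - y| ^ ν) : ContinuousOn f s := by
  intro x hx
  rw [ContinuousWithinAt, tendsto_iff_dist_tendsto_zero]
  have hlim : Tendsto (fun y => H * |y - x| ^ ν) (𝓝[s] x) (𝓝 0) := by
    have hcont : Continuous fun y : ℝ => H * |y - x| ^ ν := by
      have := Real.continuous_rpow_const hν.le
      fun_prop
    simpa [Real.zero_rpow hν.ne'] using (hcont.tendsto x).mono_left nhdsWithin_le_nhds
  exact squeeze_zero' (Eventually.of_forall fun _ => dist_nonneg)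
    (eventually_nhdsWithin_of_forall fun y hy => hf y hy x hx) hlim

lemma norm_sub_sum_gaussSoftmax_smul_le {ι E : Type*} [Fintype ι] [SeminormedAddCommGroup E]
    [NormedSpace ℝ E] (μ : ι → ℝ) (y : E) (z : ι → E) {σ2 x δ ε B : ℝ} (hσ2 : 0 ≤ σ2)
    (hε : 0 ≤ ε) {k : ι} (hk : |x - μ k| ≤ δ / 2)
    (hclose : ∀ j, |x - μ j| ≤ δ → ‖y - z j‖ ≤ ε) (hbdd : ∀ j, ‖y - z j‖ ≤ B) :
    ‖y - ∑ j, gaussSoftmax μ σ2 x j • z j‖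
      ≤ ε + Fintype.card ι * B * Real.exp (((δ / 2) ^ 2 - δ ^ 2) / (2 * σ2)) := by
  have : Nonempty ι := ⟨k⟩
  set η := Real.exp (((δ / 2) ^ 2 - δ ^ 2) / (2 * σ2))
  have hB : 0 ≤ B := (norm_nonneg _).trans (hbdd k)
  have hterm : ∀ j, gaussSoftmax μ σ2 x j * ‖y - z j‖ ≤ gaussSoftmax μ σ2 x j * ε + η * B := by
    intro j
    have hπ := gaussSoftmax_nonneg μ σ2 x j
    by_cases hj : |x - μ j| ≤ δ
    · calc gaussSoftmax μ σ2 x j * ‖y - z j‖ ≤ gaussSoftmax μ σ2 x j * ε :=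
            mul_le_mul_of_nonneg_left (hclose j hj) hπ
        _ ≤ _ := le_add_of_nonneg_right (by positivity)
    · have hfar : gaussSoftmax μ σ2 x j ≤ η := by
        refine gaussSoftmax_le_exp μ hσ2 (k := k) ?_ ?_
        · rw [← sq_abs (x - μ k)]
          exact pow_le_pow_left₀ (abs_nonneg _) hk 2
        · rw [← sq_abs (x - μ j)]
          exact pow_le_pow_left₀ (by linarith [abs_nonneg (x - μ k)]) (not_le.1 hj).le 2
      calc gaussSoftmax μ σ2 x j * ‖y - z j‖ ≤ η * B :=
            mul_le_mul hfar (hbdd j) (norm_nonneg _) (Real.exp_pos _).le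
        _ ≤ _ := le_add_of_nonneg_left (mul_nonneg hπ hε)
  calc ‖y - ∑ j, gaussSoftmax μ σ2 x j • z j‖
      ≤ ∑ j, gaussSoftmax μ σ2 x j * ‖y - z j‖ :=
        norm_sub_sum_smul_le _ _ (gaussSoftmax_nonneg μ σ2 x) (sum_gaussSoftmax μ σ2 x)
    _ ≤ ∑ j, (gaussSoftmax μ σ2 x j * ε + η * B) := Finset.sum_le_sum fun j _ => hterm j
    _ = ε + Fintype.card ι * B * η := by
        rw [Finset.sum_add_distrib, ← Finset.sum_mul, sum_gaussSoftmax, Finset.sum_const,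
          Finset.card_univ, nsmul_eq_mul]
        ring

theorem exists_gaussSoftmax_approx {E : Type*} [NormedAddCommGroup E] [NormedSpace ℝ E]
    {s : Set ℝ} (hs : IsCompact s) (hne : s.Nonempty) {f : ℝ → E} (hf : ContinuousOn f s)
    {ε : ℝ} (hε : 0 < ε) :
    ∃ N : ℕ, 0 < N ∧ ∃ μ : Fin N → ℝ, (∀ j, μ j ∈ s) ∧ ∃ σ2 : ℝ, 0 < σ2 ∧
      ∀ x ∈ s, ‖f x - ∑ j, gaussSoftmax μ σ2 x j • f (μ j)‖ < ε := by
  obtain ⟨δ, hδ, hfδ⟩ := Metric.uniformContinuousOn_iff_le.1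
    (hs.uniformContinuousOn_of_continuous hf) (ε / 2) (half_pos hε)
  obtain ⟨C, hC⟩ := hs.exists_bound_of_continuousOn hf
  obtain ⟨t, hts, ht, hcover⟩ := hs.finite_cover_balls (half_pos hδ)
  set N := ht.toFinset.card
  let μ : Fin N → ℝ := fun j => ht.toFinset.equivFin.symm j
  have hμ : ∀ j, μ j ∈ s := fun j => hts (ht.mem_toFinset.1 (ht.toFinset.equivFin.symm j).2)
  have hnear : ∀ x ∈ s, ∃ k, |x - μ k| < δ / 2 := by
    intro x hx
    obtain ⟨y, hy, hxy⟩ := Set.mem_iUnion₂.1 (hcover hx)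
    exact ⟨ht.toFinset.equivFin ⟨y, ht.mem_toFinset.2 hy⟩, by simpa [μ, Real.dist_eq] using hxy⟩
  have hlim := (tendsto_exp_div_nhdsGT_zero (c := ((δ / 2) ^ 2 - δ ^ 2) / 2)
    (by nlinarith)).const_mul ((N : ℝ) * (2 * C))
  rw [mul_zero] at hlim
  obtain ⟨σ2, hσ2small, hσ2⟩ :=
    ((hlim.eventually (gt_mem_nhds (half_pos hε))).and self_mem_nhdsWithin).exists
  refine ⟨N, (hnear _ hne.some_mem).choose.pos, μ, hμ, σ2, hσ2, fun x hx => ?_⟩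
  obtain ⟨k, hk⟩ := hnear x hx
  have hbound := norm_sub_sum_gaussSoftmax_smul_le μ (f x) (fun j => f (μ j)) hσ2.le
    (half_pos hε).le hk.le
    (fun j hj => by simpa [dist_eq_norm, Real.dist_eq] using hfδ x hx (μ j) (hμ j) hj)
    (fun j => (norm_sub_le _ _).trans (add_le_add (hC x hx) (hC (μ j) (hμ j))))
  rw [Fintype.card_fin] at hbound
  rw [div_div] at hσ2small
  exact hbound.trans_lt (by linarith)

attribute [local instance] Matrix.frobeniusNormedAddCommGroup Matrix.frobeniusNormedSpace

lemma frobNorm_eq_norm {q : ℕ} (A : Matrix (Fin q) (Fin q) ℝ) : frobNorm A = ‖A‖ := by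
  simp [frobNorm, Matrix.frobenius_norm_def, Real.sqrt_eq_rpow]

theorem stmt3 (ν : ℝ) (hν0 : 0 < ν) (a b : ℝ) (hab : a < b)
    (q : ℕ) (Ω : ℝ → Matrix (Fin q) (Fin q) ℝ)
    (hpd : ∀ x ∈ Set.Icc a b, (Ω x).PosDef)
    (hhold : ∀ i j : Fin q, ∃ H : ℝ, ∀ x ∈ Set.Icc a b, ∀ x' ∈ Set.Icc a b,
      |Ω x i j - Ω x' i j| ≤ H * |x - x'| ^ ν) :
    ∀ ε > 0, ∃ N : ℕ, 0 < N ∧ ∃ μ : Fin N → ℝ, ∃ σ2 : ℝ, 0 < σ2 ∧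
      ∃ Ωs : Fin N → Matrix (Fin q) (Fin q) ℝ, (∀ j, (Ωs j).PosDef) ∧
        (∫ x in Set.Ioc a b,
          frobNorm (Ω x - ∑ j : Fin N,
            (Real.exp (-(x - μ j) ^ 2 / (2 * σ2)) /
              ∑ t : Fin N, Real.exp (-(x - μ t) ^ 2 / (2 * σ2))) • Ωs j))
          < ε := by
  intro ε hε
  have hΩ : ContinuousOn Ω (Set.Icc a b) := continuousOn_pi.2 fun i => continuousOn_pi.2 fun j =>
    (hhold i j).elim fun _ hH => continuousOn_of_abs_sub_le_mul_rpow hν0 hH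
  have hba : 0 < b - a := sub_pos.2 hab
  obtain ⟨N, hN, μ, hμ, σ2, hσ2, happrox⟩ := exists_gaussSoftmax_approx isCompact_Icc
    (Set.nonempty_Icc.2 hab.le) hΩ (ε := ε / (2 * (b - a))) (by positivity)
  refine ⟨N, hN, μ, σ2, hσ2, fun j => Ω (μ j), fun j => hpd _ (hμ j), ?_⟩
  calc _ ≤ ‖∫ x in Set.Ioc a b, frobNorm (Ω x - ∑ j, gaussSoftmax μ σ2 x j • Ω (μ j))‖ :=
        le_abs_self _
    _ ≤ ε / (2 * (b - a)) * volume.real (Set.Ioc a b) :=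
        norm_setIntegral_le_of_norm_le_const measure_Ioc_lt_top fun x hx => by
          rw [frobNorm_eq_norm, norm_norm]
          exact (happrox x (Set.Ioc_subset_Icc_self hx)).le
    _ < ε := by
        rw [Real.volume_real_Ioc_of_le hab.le, div_mul_eq_mul_div, div_lt_iff₀ (by positivity)]
        nlinarith
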